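/- Let $s$ be a positive integer and $k > 2$ an integer. Set $D = ((1+2s)^k - s)^2 - 2(1+2s)^k$. Then $D$ is a positive non-square integer and the fundamental period of the regular continued fraction expansion of $\sqrt{D}$ has length $8k - 4$. -/

import Mathlib

/-- The Gauss-map iterates of `x`: `cfX x 0 = x` and
`cfX x (n+1) = 1 / (cfX x n - ⌊cfX x n⌋)`. -/
noncomputable def cfX (x : ℝ) : ℕ → ℝ
  | 0 => x
  | n + 1 => (cfX x n - ⌊cfX x n⌋)⁻¹

/-- The `n`-th partial quotient of the regular continued fraction of `x`. -/
noncomputable def cfA (x : ℝ) (n : ℕ) : ℤ := ⌊cfX x n⌋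

/-- `p` is a period (from index `1` on) of the continued fraction expansion of `x`. -/
def cfPeriod (x : ℝ) (p : ℕ) : Prop :=
  0 < p ∧ ∀ n, 1 ≤ n → cfA x (n + p) = cfA x n

/-!
The continued fraction of `√D` is computed on surds `(P + √D) / Q` with integral `P`, `Q`.
Writing `a = 1 + 2s` and `N = aᵏ`, so that `D = (N - s)² - 2N`, the first `4k - 2` steps come in
blocks of four whose entries are explicit in the powers `aʲ` and `aᵏ⁻ʲ`, and each step is a
polynomial identity plus polynomial inequalities in `s`, `aʲ`, `aᵏ⁻ʲ`. The second half of the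
period is the first half read backwards, since a step of the algorithm between reduced surds can
be reversed. After `L = 8k - 4` steps the surd is `P + √D`, which differs from `√D` by an integer,
so `L` is a period. A shorter period `p` would give `x_p = x_L` by uniqueness of the expansion of
an irrational number, i.e. `Q_p = 1`, whereas `Q_n > 1` strictly inside the period.
-/

open GenContFract

lemma cfX_succ (x : ℝ) (n : ℕ) : cfX x (n + 1) = (Int.fract (cfX x n))⁻¹ := rfl

lemma cfX_add (x : ℝ) (m n : ℕ) : cfX x (m + n) = cfX (cfX x m) n := by
  induction n with
  | zero => rfl
  | succ n ih => rw [← Nat.add_assoc, cfX_succ, ih, cfX_succ]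

lemma Irrational.cfX {x : ℝ} (hx : Irrational x) (n : ℕ) : Irrational (cfX x n) := by
  induction n with
  | zero => exact hx
  | succ n ih => exact (ih.sub_intCast _).inv

lemma Irrational.fract_ne_zero {x : ℝ} (hx : Irrational x) : Int.fract x ≠ 0 :=
  Int.fract_ne_zero_iff.mpr fun ⟨m, hm⟩ => hx.ne_int m hm.symm

lemma intFractPair_stream_eq_cfX {x : ℝ} (hx : Irrational x) (n : ℕ) :
    IntFractPair.stream x n = some (IntFractPair.of (cfX x n)) := by
  induction n with
  | zero => exact IntFractPair.stream_zero x
  | succ n ih => exact IntFractPair.stream_succ_of_some ih (hx.cfX n).fract_ne_zero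

lemma genContFract_of_eq_of_cfA_eq {y z : ℝ} (hy : Irrational y) (hz : Irrational z)
    (h : ∀ n, cfA y n = cfA z n) : GenContFract.of y = GenContFract.of z := by
  ext1
  · simp only [of_h_eq_floor]
    exact congrArg _ (h 0)
  · refine Stream'.Seq.ext fun n => ?_
    rw [get?_of_eq_some_of_succ_get?_intFractPair_stream
        (intFractPair_stream_eq_cfX hy (n + 1)),
      get?_of_eq_some_of_succ_get?_intFractPair_stream (intFractPair_stream_eq_cfX hz (n + 1))]
    simp only [IntFractPair.of]
    rw [show ⌊cfX y (n + 1)⌋ = ⌊cfX z (n + 1)⌋ from h (n + 1)]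

lemma eq_of_cfA_eq {y z : ℝ} (hy : Irrational y) (hz : Irrational z)
    (h : ∀ n, cfA y n = cfA z n) : y = z := by
  have hz' := of_convergence z
  rw [← genContFract_of_eq_of_cfA_eq hy hz h] at hz'
  exact tendsto_nhds_unique (of_convergence y) hz'

lemma cfX_add_of_cfX_succ_eq {x : ℝ} {p n : ℕ} (hp : cfX x (p + 1) = cfX x 1) (hn : 1 ≤ n) :
    cfX x (n + p) = cfX x n := by
  obtain ⟨m, rfl⟩ := Nat.exists_eq_add_of_le hn
  rw [show 1 + m + p = (p + 1) + m by ring, cfX_add, hp, ← cfX_add]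

lemma cfPeriod_iff {x : ℝ} (hx : Irrational x) {p : ℕ} :
    cfPeriod x p ↔ 0 < p ∧ cfX x (p + 1) = cfX x 1 := by
  refine ⟨fun ⟨hp, hper⟩ => ⟨hp, eq_of_cfA_eq (hx.cfX _) (hx.cfX _) fun n => ?_⟩,
    fun ⟨hp, hper⟩ =>
      ⟨hp, fun n hn => congrArg Int.floor (cfX_add_of_cfX_succ_eq hper hn)⟩⟩
  simpa only [cfA, ← cfX_add, add_comm, add_left_comm] using hper (n + 1) (by omega)

lemma Irrational.eq_one_of_add_div_eq {r : ℝ} (hr : Irrational r) {a b q : ℤ} (hq : q ≠ 0)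
    (h : (a + r) / q = b + r) : q = 1 := by
  by_contra hne
  rw [div_eq_iff (by exact_mod_cast hq)] at h
  refine (hr.intCast_mul (sub_ne_zero.mpr hne)).ne_int (a - b * q) ?_
  push_cast
  linarith

/-- One step `x ↦ (x - ⌊x⌋)⁻¹` of the continued fraction algorithm for `√D`, written on surds
`x = (P + √D) / Q`: the partial quotient is `A` and the next surd is `(P' + √D) / Q'`. -/
structure IsSqrtCFStep (D P Q A P' Q' : ℤ) : Prop where
  pos : 0 < Q
  next_P : P' = A * Q - P
  next_Q : Q * Q' = D - P' ^ 2
  nonneg : 0 ≤ P'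
  sq_lt : P' ^ 2 < D
  lt_sq : D < (P' + Q) ^ 2

namespace IsSqrtCFStep

variable {D P Q A P' Q' : ℤ}

lemma pos_next (h : IsSqrtCFStep D P Q A P' Q') : 0 < Q' :=
  pos_of_mul_pos_right (by linarith [h.next_Q, h.sq_lt]) h.pos.le

lemma sqrt_bounds (h : IsSqrtCFStep D P Q A P' Q') :
    (P' : ℝ) < √D ∧ √D < P' + Q := by
  have hPQ : (0 : ℝ) < P' + Q := by exact_mod_cast add_pos_of_nonneg_of_pos h.nonneg h.pos
  exact ⟨Real.lt_sqrt_of_sq_lt (by exact_mod_cast h.sq_lt),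
    (Real.sqrt_lt' hPQ).mpr (by exact_mod_cast h.lt_sq)⟩

lemma floor_eq (h : IsSqrtCFStep D P Q A P' Q') : ⌊(P + √D) / Q⌋ = A := by
  obtain ⟨hlo, hhi⟩ := h.sqrt_bounds
  have hQ : (0 : ℝ) < Q := by exact_mod_cast h.pos
  have hA : (A : ℝ) * Q = P' + P := by rw [h.next_P]; push_cast; ring
  rw [Int.floor_eq_iff, le_div_iff₀ hQ, div_lt_iff₀ hQ, add_mul, hA]
  constructor <;> linarith

lemma inv_fract_eq (h : IsSqrtCFStep D P Q A P' Q') :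
    (Int.fract ((P + √D) / Q))⁻¹ = (P' + √D) / Q' := by
  obtain ⟨hlo, -⟩ := h.sqrt_bounds
  have hQ : (Q : ℝ) ≠ 0 := by exact_mod_cast h.pos.ne'
  have hQ' : (Q' : ℝ) ≠ 0 := by exact_mod_cast h.pos_next.ne'
  have hD : √D ^ 2 = D := Real.sq_sqrt (by exact_mod_cast (sq_nonneg P').trans h.sq_lt.le)
  have hQQ' : (Q : ℝ) * Q' = D - P' ^ 2 := by exact_mod_cast h.next_Q
  have hfract : Int.fract ((P + √D) / Q) = (√D - P') / Q := by
    rw [Int.fract, h.floor_eq, h.next_P]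
    field_simp
    push_cast
    ring
  rw [hfract, inv_div, div_eq_div_iff (by linarith) hQ']
  linear_combination hQQ' - hD

lemma not_isSquare (h : IsSqrtCFStep D P 1 A P' Q') : ¬ IsSquare D := by
  rintro ⟨r, rfl⟩
  rw [← abs_mul_abs_self] at h
  have hlo : P' < |r| := lt_of_pow_lt_pow_left₀ 2 (abs_nonneg r) (by simpa [sq] using h.sq_lt)
  have hhi : |r| < P' + 1 :=
    lt_of_pow_lt_pow_left₀ 2 (by linarith [h.nonneg]) (by simpa [sq] using h.lt_sq)
  omega

lemma radicand_pos (h : IsSqrtCFStep D P Q A P' Q') : 0 < D :=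
  (sq_nonneg P').trans_lt h.sq_lt

/-- A step can be read backwards, from `(P'' + √D) / Q'` to `(P' + √D) / Q`, once the conjugate
`(P' - √D) / Q'` of the surd it reaches lies in `(-1, 0)`, i.e. once `D < (P' + Q')²`. -/
lemma reverse {A' P'' : ℤ} (h : IsSqrtCFStep D P Q A P' Q') (hP : P' = A' * Q' - P'')
    (hred : D < (P' + Q') ^ 2) : IsSqrtCFStep D P'' Q' A' P' Q :=
  ⟨h.pos_next, hP, by rw [mul_comm, h.next_Q], h.nonneg, h.sq_lt, hred⟩

end IsSqrtCFStep

section SqrtChain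

variable {D : ℤ} {P Q A : ℕ → ℤ} {L H : ℕ}

lemma cfX_sqrt_eq (hP0 : P 0 = 0) (hQ0 : Q 0 = 1)
    (hstep : ∀ n < L, IsSqrtCFStep D (P n) (Q n) (A n) (P (n + 1)) (Q (n + 1))) :
    ∀ n ≤ L, cfX √D n = (P n + √D) / Q n
  | 0, _ => by simp [cfX, hP0, hQ0]
  | n + 1, hn => by
    rw [cfX_succ, cfX_sqrt_eq hP0 hQ0 hstep n (by omega), (hstep n (by omega)).inv_fract_eq]

theorem isLeast_cfPeriod_sqrt (hL : 0 < L) (hP0 : P 0 = 0) (hQ0 : Q 0 = 1)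
    (hstep : ∀ n < L, IsSqrtCFStep D (P n) (Q n) (A n) (P (n + 1)) (Q (n + 1)))
    (hQL : Q L = 1) (hQ : ∀ n, 0 < n → n < L → Q n ≠ 1) :
    IsLeast {p | cfPeriod √D p} L := by
  have hstep0 := hstep 0 hL
  rw [hQ0] at hstep0
  have hirr : Irrational √D :=
    (irrational_sqrt_intCast_iff_of_nonneg hstep0.radicand_pos.le).mpr hstep0.not_isSquare
  have hxL : cfX √D L = P L + √D := by simp [cfX_sqrt_eq hP0 hQ0 hstep L le_rfl, hQL]
  have hperL : cfX √D (L + 1) = cfX √D 1 := by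
    rw [cfX_succ, cfX_succ, hxL, Int.fract_intCast_add]
    rfl
  refine ⟨(cfPeriod_iff hirr).mpr ⟨hL, hperL⟩, fun p hp => ?_⟩
  obtain ⟨hp, hperp⟩ := (cfPeriod_iff hirr).mp hp
  by_contra! hpL
  have hxp : cfX √D p = cfX √D L := by
    rw [← cfX_add_of_cfX_succ_eq hperL hp, add_comm, cfX_add_of_cfX_succ_eq hperp hL]
  rw [hxL, cfX_sqrt_eq hP0 hQ0 hstep p hpL.le] at hxp
  exact hQ p hp hpL (hirr.eq_one_of_add_div_eq (hstep p hpL).pos.ne' hxp)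

/-- The period of `√D` is a palindrome: `Q` and `A` are symmetric about `H` (`c = 0`) and `P`
about `H + 1/2` (`c = 1`). -/
def reflectAbout (H c : ℕ) (f : ℕ → ℤ) (n : ℕ) : ℤ :=
  if n ≤ H then f n else f (2 * H + c - n)

theorem isSqrtCFStep_reflectAbout (hH : 1 ≤ H)
    (hstep : ∀ m < H, IsSqrtCFStep D (P m) (Q m) (A m) (P (m + 1)) (Q (m + 1)))
    (hred : ∀ m, 1 ≤ m → m ≤ H → D < (P m + Q m) ^ 2) (hmid : 2 * P H = A H * Q H) :
    ∀ n < 2 * H, IsSqrtCFStep D (reflectAbout H 1 P n) (reflectAbout H 0 Q n)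
      (reflectAbout H 0 A n) (reflectAbout H 1 P (n + 1)) (reflectAbout H 0 Q (n + 1)) := by
  intro n hn
  rcases lt_or_ge n H with hlt | hge
  · simp only [reflectAbout, if_pos hlt.le, if_pos (show n + 1 ≤ H by omega)]
    exact hstep n hlt
  obtain ⟨m, rfl⟩ : ∃ m, n = 2 * H - m := ⟨2 * H - n, by omega⟩
  have hprev := hstep (m - 1) (by omega)
  rw [show m - 1 + 1 = m by omega] at hprev
  simp only [reflectAbout, if_neg (show ¬ 2 * H - m + 1 ≤ H by omega),
    show 2 * H + 1 - (2 * H - m + 1) = m by omega,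
    show 2 * H + 0 - (2 * H - m + 1) = m - 1 by omega]
  rcases eq_or_ne m H with rfl | hmH
  · simp only [show 2 * m - m = m by omega, le_refl, if_true]
    exact hprev.reverse (by linarith) (hred m hH le_rfl)
  · simp only [if_neg (show ¬ 2 * H - m ≤ H by omega),
      show 2 * H + 1 - (2 * H - m) = m + 1 by omega, show 2 * H + 0 - (2 * H - m) = m by omega]
    exact hprev.reverse (by linarith [(hstep m (by omega)).next_P])
      (hred m (by omega) (by omega))

theorem isLeast_cfPeriod_sqrt_of_half (hH : 1 ≤ H) (hP0 : P 0 = 0) (hQ0 : Q 0 = 1)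
    (hstep : ∀ m < H, IsSqrtCFStep D (P m) (Q m) (A m) (P (m + 1)) (Q (m + 1)))
    (hred : ∀ m, 1 ≤ m → m ≤ H → D < (P m + Q m) ^ 2 ∧ 1 < Q m)
    (hmid : 2 * P H = A H * Q H) :
    0 < D ∧ ¬ IsSquare D ∧ IsLeast {p | cfPeriod √D p} (2 * H) := by
  have hstep0 := hstep 0 (by omega)
  rw [hQ0] at hstep0
  refine ⟨hstep0.radicand_pos, hstep0.not_isSquare, isLeast_cfPeriod_sqrt (by omega)
    (by simp [reflectAbout, hP0]) (by simp [reflectAbout, hQ0])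
    (isSqrtCFStep_reflectAbout hH hstep (fun m h1 h2 => (hred m h1 h2).1) hmid)
    (by simp [reflectAbout, hQ0, show ¬ 2 * H ≤ H by omega]) fun n hn hnL => ?_⟩
  unfold reflectAbout
  split_ifs
  · exact (hred n hn (by omega)).2.ne'
  · exact (hred (2 * H + 0 - n) (by omega) (by omega)).2.ne'

end SqrtChain

namespace PeriodC2

variable {s a N : ℤ}

lemma radicand_lt_sq {t : ℤ} (hN : 0 < N) (hNs : 0 ≤ N - s) (ht : N - s ≤ t) :
    (N - s) ^ 2 - 2 * N < t ^ 2 := by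
  nlinarith [mul_self_le_mul_self hNs ht]

lemma step_zero (hs : 1 ≤ s) (ha : a = 1 + 2 * s) (hN : a ^ 3 ≤ N) :
    IsSqrtCFStep ((N - s) ^ 2 - 2 * N) 0 1 (N - s - 2) (N - s - 2) (2 * N - 4 * s - 4) := by
  subst ha
  have h2 : s ≤ s * s := by nlinarith
  have h3 : s * s ≤ s * s * s := by nlinarith
  exact ⟨one_pos, by ring, by ring, by nlinarith, by nlinarith, by nlinarith⟩

lemma step_one (hs : 1 ≤ s) (ha : a = 1 + 2 * s) (hN : a ^ 3 ≤ N) :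
    IsSqrtCFStep ((N - s) ^ 2 - 2 * N) (N - s - 2) (2 * N - 4 * s - 4) 1 (N - 3 * s - 2) a ∧
      (N - s) ^ 2 - 2 * N < (N - s - 2 + (2 * N - 4 * s - 4)) ^ 2 ∧ 1 < 2 * N - 4 * s - 4 := by
  subst ha
  have h2 : s ≤ s * s := by nlinarith
  have h3 : s * s ≤ s * s * s := by nlinarith
  exact ⟨⟨by nlinarith, by ring, by ring, by nlinarith, by nlinarith, by nlinarith⟩,
    by nlinarith, by nlinarith⟩

lemma step_two {w : ℤ} (hs : 1 ≤ s) (ha : a = 1 + 2 * s) (hw : a ^ 2 ≤ w) (hN : N = a * w) :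
    IsSqrtCFStep ((N - s) ^ 2 - 2 * N) (N - 3 * s - 2) a (2 * w - 3) (N - a - s)
        (2 * N - a - 2 * w - 2 * s) ∧
      (N - s) ^ 2 - 2 * N < (N - 3 * s - 2 + a) ^ 2 ∧ 1 < a := by
  subst ha hN
  have h2 : s ≤ s * s := by nlinarith
  have h3 : s * s ≤ s * s * s := by nlinarith
  exact ⟨⟨by linarith, by ring, by ring, by nlinarith, by nlinarith, by nlinarith⟩,
    by nlinarith, by linarith⟩

lemma step_four_mul {u v a' : ℤ} (hs : 1 ≤ s) (ha : a = 1 + 2 * s) (hu : a ≤ u) (hv : a ≤ v)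
    (ha' : a' = a * u) (hN : N = u * v) :
    IsSqrtCFStep ((N - s) ^ 2 - 2 * N) (N - 2 * v - s) (2 * v) (u - 2) (N - 2 * v + s)
        (2 * N - 2 * v - a' + 2 * s) ∧
      (N - s) ^ 2 - 2 * N < (N - 2 * v - s + 2 * v) ^ 2 ∧ 1 < 2 * v := by
  subst ha ha' hN
  have hNpos : 0 < u * v := mul_pos (by linarith) (by linarith)
  have hNs : 0 ≤ u * v - s := by nlinarith
  have hQ : 0 < 2 * (u * v) - 2 * v - (1 + 2 * s) * u + 2 * s := by
    nlinarith [mul_nonneg (by linarith : (0 : ℤ) ≤ v - (1 + 2 * s)) (by linarith : (0 : ℤ) ≤ u)]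
  refine ⟨⟨by linarith, by ring, by ring, by nlinarith, ?_, ?_⟩, ?_, by linarith⟩
  · nlinarith [mul_pos (by linarith : (0 : ℤ) < v) hQ]
  · exact radicand_lt_sq hNpos hNs (by linarith)
  · exact radicand_lt_sq hNpos hNs (by linarith)

lemma step_four_mul_add_one {u v a' : ℤ} (hs : 1 ≤ s) (ha : a = 1 + 2 * s) (hu : a ≤ u)
    (hv : a ^ 2 ≤ v) (ha' : a' = a * u) (hN : N = u * v) :
    IsSqrtCFStep ((N - s) ^ 2 - 2 * N) (N - 2 * v + s) (2 * N - 2 * v - a' + 2 * s) 1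
        (N - a' + s) a' ∧
      (N - s) ^ 2 - 2 * N < (N - 2 * v + s + (2 * N - 2 * v - a' + 2 * s)) ^ 2 ∧
      1 < 2 * N - 2 * v - a' + 2 * s := by
  subst ha ha' hN
  have hNpos : 0 < u * v := mul_pos (by linarith) (by nlinarith)
  have hNs : 0 ≤ u * v - s := by nlinarith
  have hxy : 0 ≤ (u - (1 + 2 * s)) * (v - (1 + 2 * s) ^ 2) :=
    mul_nonneg (by linarith) (by linarith)
  have hP : 0 ≤ u * v - (1 + 2 * s) * u + s := by
    nlinarith [mul_nonneg (by nlinarith : (0 : ℤ) ≤ v - (1 + 2 * s)) (by linarith : (0 : ℤ) ≤ u)]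
  have hQ : 2 * s + 2 ≤ 2 * (u * v) - 2 * v - (1 + 2 * s) * u + 2 * s := by nlinarith
  refine ⟨⟨by linarith, by ring, by ring, hP, ?_, ?_⟩, ?_, by linarith⟩
  · nlinarith [mul_pos (by nlinarith : (0 : ℤ) < (1 + 2 * s) * u)
      (by linarith : (0 : ℤ) < 2 * (u * v) - 2 * v - (1 + 2 * s) * u + 2 * s)]
  · exact radicand_lt_sq hNpos hNs (by nlinarith)
  · exact radicand_lt_sq hNpos hNs (by nlinarith)

lemma step_before_middle (hs : 1 ≤ s) (ha : a = 1 + 2 * s) (hN : a ^ 3 ≤ N) :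
    IsSqrtCFStep ((N - s) ^ 2 - 2 * N) (N - 2 * a + s) (N - 2 * a + 2 * s) 2 (N - s - 2) 2 ∧
      (N - s) ^ 2 - 2 * N < (N - 2 * a + s + (N - 2 * a + 2 * s)) ^ 2 ∧
      1 < N - 2 * a + 2 * s := by
  subst ha
  have h2 : s ≤ s * s := by nlinarith
  have h3 : s * s ≤ s * s * s := by nlinarith
  have hNpos : 0 < N := by nlinarith
  have hNs : 0 ≤ N - s := by nlinarith
  refine ⟨⟨by nlinarith, by ring, by ring, by nlinarith, by nlinarith, ?_⟩, ?_, by nlinarith⟩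
  · exact radicand_lt_sq hNpos hNs (by nlinarith)
  · exact radicand_lt_sq hNpos hNs (by nlinarith)

lemma step_four_mul_add_two {u w a' : ℤ} (hs : 1 ≤ s) (ha : a = 1 + 2 * s) (hu : a ≤ u)
    (hw : a ≤ w) (ha' : a' = a * u) (hN : N = a * u * w) :
    IsSqrtCFStep ((N - s) ^ 2 - 2 * N) (N - a' + s) a' (2 * w - 2) (N - a' - s)
        (2 * N - a' - 2 * w - 2 * s) ∧
      (N - s) ^ 2 - 2 * N < (N - a' + s + a') ^ 2 ∧ 1 < a' := by
  subst ha ha' hN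
  have hNpos : 0 < (1 + 2 * s) * u * w :=
    mul_pos (mul_pos (by linarith) (by linarith)) (by linarith)
  have huw : 1 ≤ u * w := by
    nlinarith [mul_pos (by linarith : (0 : ℤ) < u) (by linarith : (0 : ℤ) < w)]
  have hNs : 0 ≤ (1 + 2 * s) * u * w - s := by
    nlinarith [mul_nonneg (by linarith : (0 : ℤ) ≤ 1 + 2 * s) (by linarith : (0 : ℤ) ≤ u * w - 1)]
  have hau : 1 + 2 * s ≤ (1 + 2 * s) * u := by nlinarith
  have hP : 0 ≤ (1 + 2 * s) * u * w - (1 + 2 * s) * u - s := by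
    nlinarith [mul_nonneg (by linarith : (0 : ℤ) ≤ (1 + 2 * s) * u)
      (by linarith : (0 : ℤ) ≤ w - (1 + 2 * s))]
  have hQ : 2 * s + 2 ≤ 2 * ((1 + 2 * s) * u * w) - (1 + 2 * s) * u - 2 * w - 2 * s := by
    nlinarith [mul_nonneg (mul_nonneg (by linarith : (0 : ℤ) ≤ 1 + 2 * s)
      (by linarith : (0 : ℤ) ≤ u - (1 + 2 * s))) (by linarith : (0 : ℤ) ≤ w - 1),
      mul_nonneg (by linarith : (0 : ℤ) ≤ 2 * s - 1) (by linarith : (0 : ℤ) ≤ w)]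
  refine ⟨⟨by linarith, by ring, by ring, hP, ?_, ?_⟩, ?_, by linarith⟩
  · nlinarith [mul_pos (by linarith : (0 : ℤ) < (1 + 2 * s) * u)
      (by linarith : (0 : ℤ) < 2 * ((1 + 2 * s) * u * w) - (1 + 2 * s) * u - 2 * w - 2 * s)]
  · exact radicand_lt_sq hNpos hNs (by linarith)
  · exact radicand_lt_sq hNpos hNs (by linarith)

lemma step_four_mul_add_three {u w a' : ℤ} (hs : 1 ≤ s) (ha : a = 1 + 2 * s) (hu : 1 ≤ u)
    (hw : a ≤ w) (ha' : a' = a * u) (hN : N = a * u * w) :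
    IsSqrtCFStep ((N - s) ^ 2 - 2 * N) (N - a' - s) (2 * N - a' - 2 * w - 2 * s) 1
        (N - 2 * w - s) (2 * w) ∧
      (N - s) ^ 2 - 2 * N < (N - a' - s + (2 * N - a' - 2 * w - 2 * s)) ^ 2 ∧
      1 < 2 * N - a' - 2 * w - 2 * s := by
  subst ha ha' hN
  have hNpos : 0 < (1 + 2 * s) * u * w :=
    mul_pos (mul_pos (by linarith) (by linarith)) (by linarith)
  have hau : 3 ≤ (1 + 2 * s) * u := by nlinarith
  have f1 : 3 * ((1 + 2 * s) * u) ≤ (1 + 2 * s) * u * w := by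
    nlinarith [mul_nonneg (by linarith : (0 : ℤ) ≤ (1 + 2 * s) * u)
      (by linarith : (0 : ℤ) ≤ w - 3)]
  have f2 : 3 * w ≤ (1 + 2 * s) * u * w := by
    nlinarith [mul_nonneg (by linarith : (0 : ℤ) ≤ (1 + 2 * s) * u - 3)
      (by linarith : (0 : ℤ) ≤ w)]
  have f3 : 6 * s ≤ (1 + 2 * s) * u * w := by
    nlinarith [mul_nonneg (by linarith : (0 : ℤ) ≤ (1 + 2 * s) * u - 3)
      (by linarith : (0 : ℤ) ≤ w),
      mul_nonneg (by linarith : (0 : ℤ) ≤ s) (by linarith : (0 : ℤ) ≤ w - 3)]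
  have hNs : 0 ≤ (1 + 2 * s) * u * w - s := by linarith
  have hQ : 2 * s + 2 ≤ 2 * ((1 + 2 * s) * u * w) - (1 + 2 * s) * u - 2 * w - 2 * s := by
    linarith
  refine ⟨⟨by linarith, by ring, by ring, by linarith, ?_, ?_⟩, ?_, by linarith⟩
  · nlinarith [mul_pos (by linarith : (0 : ℤ) < 2 * w)
      (by linarith : (0 : ℤ) < 2 * ((1 + 2 * s) * u * w) - (1 + 2 * s) * u - 2 * w - 2 * s)]
  · exact radicand_lt_sq hNpos hNs (by linarith)
  · exact radicand_lt_sq hNpos hNs (by linarith)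

lemma middle_lt_sq (hN : 0 < N) : (N - s) ^ 2 - 2 * N < (N - s - 2 + 2) ^ 2 := by
  linarith [show N - s - 2 + 2 = N - s by ring]

variable (s : ℤ) (k : ℕ)

def radicand : ℤ := ((1 + 2 * s) ^ k - s) ^ 2 - 2 * (1 + 2 * s) ^ k

/-- With `a = 1 + 2s`, the surds `x_n = (halfP n + √D) / halfQ n` and partial quotients
`halfA n` of `√(radicand s k)` for `0 ≤ n ≤ 4k - 2`, the first half of the period. -/
def halfP (n : ℕ) : ℤ :=
  let a := 1 + 2 * s
  if n = 0 then 0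
  else if n = 1 ∨ n = 4 * k - 2 then a ^ k - s - 2
  else if n = 2 then a ^ k - 3 * s - 2
  else if n % 4 = 0 then a ^ k - 2 * a ^ (k - n / 4) - s
  else if n % 4 = 1 then a ^ k - 2 * a ^ (k - n / 4) + s
  else if n % 4 = 2 then a ^ k - a ^ (n / 4 + 1) + s
  else a ^ k - a ^ (n / 4 + 1) - s

def halfQ (n : ℕ) : ℤ :=
  let a := 1 + 2 * s
  if n = 0 then 1
  else if n = 1 then 2 * a ^ k - 4 * s - 4
  else if n = 4 * k - 2 then 2
  else if n % 4 = 0 then 2 * a ^ (k - n / 4)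
  else if n % 4 = 1 then 2 * a ^ k - 2 * a ^ (k - n / 4) - a ^ (n / 4 + 1) + 2 * s
  else if n % 4 = 2 then a ^ (n / 4 + 1)
  else 2 * a ^ k - a ^ (n / 4 + 1) - 2 * a ^ (k - n / 4 - 1) - 2 * s

def halfA (n : ℕ) : ℤ :=
  let a := 1 + 2 * s
  if n = 0 ∨ n = 4 * k - 2 then a ^ k - s - 2
  else if n = 2 then 2 * a ^ (k - 1) - 3
  else if n = 4 * k - 3 then 2
  else if n % 4 = 0 then a ^ (n / 4) - 2
  else if n % 4 = 2 then 2 * a ^ (k - n / 4 - 1) - 2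
  else 1

def HalfTableStep (m : ℕ) : Prop :=
  IsSqrtCFStep (radicand s k) (halfP s k m) (halfQ s k m) (halfA s k m)
      (halfP s k (m + 1)) (halfQ s k (m + 1)) ∧
    radicand s k < (halfP s k m + halfQ s k m) ^ 2 ∧ 1 < halfQ s k m

variable {s k}

section

variable (hs : 1 ≤ s) (hk : 3 ≤ k)
include hs hk

lemma halfTable_isSqrtCFStep_zero :
    IsSqrtCFStep (radicand s k) (halfP s k 0) (halfQ s k 0) (halfA s k 0)
      (halfP s k 1) (halfQ s k 1) := by
  simp (disch := omega) only [halfP, halfQ, halfA, if_neg, true_or, ↓reduceIte]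
  exact step_zero hs rfl (pow_le_pow_right₀ (by omega) hk)

lemma halfTableStep_one : HalfTableStep s k 1 := by
  simp (disch := omega) only [HalfTableStep, halfP, halfQ, halfA, if_neg, true_or,
    ↓reduceIte, Nat.reduceAdd, Nat.reduceDiv, pow_one]
  exact step_one hs rfl (pow_le_pow_right₀ (by omega) hk)

lemma halfTableStep_two : HalfTableStep s k 2 := by
  simp (disch := omega) only [HalfTableStep, halfP, halfQ, halfA, if_neg, ↓reduceIte,
    Nat.reduceAdd, Nat.reduceDiv, Nat.reduceMod, Nat.sub_zero, pow_one]
  exact step_two hs rfl (pow_le_pow_right₀ (by omega) (by omega))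
    (by rw [← pow_succ']; congr; omega)

lemma halfTableStep_four_mul {j : ℕ} (hj : 1 ≤ j) (hjk : j < k) :
    HalfTableStep s k (4 * j) := by
  simp (disch := omega) only [HalfTableStep, halfP, halfQ, halfA, if_pos, if_neg,
    show 4 * j / 4 = j by omega, show (4 * j + 1) / 4 = j by omega]
  exact step_four_mul hs rfl (le_self_pow₀ (by omega) (by omega))
    (le_self_pow₀ (by omega) (by omega)) (pow_succ' _ _) (by rw [← pow_add]; congr; omega)

lemma halfTableStep_four_mul_add_one {j : ℕ} (hj : 1 ≤ j) (hjk : j + 2 ≤ k) :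
    HalfTableStep s k (4 * j + 1) := by
  simp (disch := omega) only [HalfTableStep, halfP, halfQ, halfA, if_pos, if_neg,
    show (4 * j + 1) / 4 = j by omega, show (4 * j + 1 + 1) / 4 = j by omega]
  exact step_four_mul_add_one hs rfl (le_self_pow₀ (by omega) (by omega))
    (pow_le_pow_right₀ (by omega) (by omega)) (pow_succ' _ _) (by rw [← pow_add]; congr; omega)

lemma halfTableStep_before_middle : HalfTableStep s k (4 * k - 3) := by
  simp (disch := omega) only [HalfTableStep, halfP, halfQ, halfA, if_pos, if_neg, or_true,
    ↓reduceIte, show (4 * k - 3) / 4 = k - 1 by omega, show k - (k - 1) = 1 by omega,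
    show k - 1 + 1 = k by omega, show 4 * k - 3 + 1 = 4 * k - 2 by omega, pow_one]
  rw [show 2 * (1 + 2 * s) ^ k - 2 * (1 + 2 * s) - (1 + 2 * s) ^ k + 2 * s =
    (1 + 2 * s) ^ k - 2 * (1 + 2 * s) + 2 * s by ring]
  exact step_before_middle hs rfl (pow_le_pow_right₀ (by omega) hk)

lemma halfTableStep_four_mul_add_two {j : ℕ} (hj : 1 ≤ j) (hjk : j + 2 ≤ k) :
    HalfTableStep s k (4 * j + 2) := by
  simp (disch := omega) only [HalfTableStep, halfP, halfQ, halfA, if_pos, if_neg,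
    show (4 * j + 2) / 4 = j by omega, show (4 * j + 2 + 1) / 4 = j by omega]
  exact step_four_mul_add_two hs rfl (le_self_pow₀ (by omega) (by omega))
    (le_self_pow₀ (by omega) (by omega)) (pow_succ' _ _)
    (by rw [← pow_succ', ← pow_add]; congr; omega)

lemma halfTableStep_four_mul_add_three {j : ℕ} (hjk : j + 2 ≤ k) :
    HalfTableStep s k (4 * j + 3) := by
  simp (disch := omega) only [HalfTableStep, halfP, halfQ, halfA, if_pos, if_neg,
    show (4 * j + 3) / 4 = j by omega, show (4 * j + 3 + 1) / 4 = j + 1 by omega,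
    Nat.sub_add_eq]
  exact step_four_mul_add_three hs rfl (one_le_pow₀ (by omega))
    (le_self_pow₀ (by omega) (by omega)) (pow_succ' _ _)
    (by rw [← pow_succ', ← pow_add]; congr; omega)

lemma halfTableStep_of_pos {m : ℕ} (hm1 : 1 ≤ m) (hm : m < 4 * k - 2) :
    HalfTableStep s k m := by
  obtain ⟨j, rfl | rfl | rfl | rfl⟩ :
      ∃ j, m = 4 * j ∨ m = 4 * j + 1 ∨ m = 4 * j + 2 ∨ m = 4 * j + 3 := ⟨m / 4, by omega⟩
  · exact halfTableStep_four_mul hs hk (by omega) (by omega)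
  · rcases (by omega : j = 0 ∨ j = k - 1 ∨ 1 ≤ j ∧ j + 2 ≤ k) with rfl | rfl | ⟨hj, hjk⟩
    · exact halfTableStep_one hs hk
    · rw [show 4 * (k - 1) + 1 = 4 * k - 3 by omega]
      exact halfTableStep_before_middle hs hk
    · exact halfTableStep_four_mul_add_one hs hk hj hjk
  · rcases (by omega : j = 0 ∨ 1 ≤ j) with rfl | hj
    · exact halfTableStep_two hs hk
    · exact halfTableStep_four_mul_add_two hs hk hj (by omega)
  · exact halfTableStep_four_mul_add_three hs hk (by omega)

lemma halfTable_middle :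
    2 * halfP s k (4 * k - 2) = halfA s k (4 * k - 2) * halfQ s k (4 * k - 2) ∧
    radicand s k < (halfP s k (4 * k - 2) + halfQ s k (4 * k - 2)) ^ 2 ∧
    1 < halfQ s k (4 * k - 2) := by
  simp (disch := omega) only [halfP, halfQ, halfA, if_neg, or_true, ↓reduceIte]
  exact ⟨by ring, middle_lt_sq (pow_pos (by omega) k), by norm_num⟩

end

end PeriodC2

open PeriodC2

/-- Corollary c2: for `k > 2` and
`D = ((1+2s)^k - s)^2 - 2(1+2s)^k`, `D` is a positive non-square integer and
the fundamental period of the continued fraction of `√D` has length `8k - 4`. -/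
theorem period_c2 (s k : ℕ) (hs : 0 < s) (hk : 2 < k) :
    let D : ℤ := ((1 + 2 * (s : ℤ)) ^ k - s) ^ 2 - 2 * (1 + 2 * (s : ℤ)) ^ k
    0 < D ∧ ¬ IsSquare D ∧
      IsLeast {p : ℕ | cfPeriod (Real.sqrt (D : ℝ)) p} (8 * k - 4) := by
  intro D
  have hs' : (1 : ℤ) ≤ s := by exact_mod_cast hs
  have hk' : 3 ≤ k := hk
  rw [show 8 * k - 4 = 2 * (4 * k - 2) by omega]
  refine isLeast_cfPeriod_sqrt_of_half (P := halfP s k) (Q := halfQ s k) (A := halfA s k)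
    (by omega) (by simp [halfP]) (by simp [halfQ]) (fun m hm => ?_) (fun m hm1 hm2 => ?_)
    (halfTable_middle hs' hk').1
  · rcases Nat.eq_zero_or_pos m with rfl | hm0
    · exact halfTable_isSqrtCFStep_zero hs' hk'
    · exact (halfTableStep_of_pos hs' hk' hm0 hm).1
  · rcases eq_or_lt_of_le hm2 with rfl | hm
    · exact (halfTable_middle hs' hk').2
    · exact (halfTableStep_of_pos hs' hk' hm1 hm).2
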